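/- For all ε > 0, all x ≥ 2 and all y ∈ [0,1] one has tanh(√(x² + ε²)/(2y))/√(x² + ε²) < tanh(ε/2)/ε. Consequently, for every U > 0, every t_z ≥ 0 and every T with 0 ≤ T ≤ T_N(U,t_z), any Δ > 0 satisfying the mean-field equation 1 = ∫_{[−π,π]³} U·tanh(√(Δ² + ε(k)²)/(2T))/(2√(Δ² + ε(k)²)) · dk/(2π)³ satisfies Δ < 2·T_N(U,t_z). -/

import Mathlib

open Real MeasureTheory Set

noncomputable section

/-- The two-dimensional density of states `N₀(ε)`, extended evenly to `(-4,4)`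
and by `0` outside. -/
def N0 (ε : ℝ) : ℝ :=
  if |ε| < 4 then
    (Real.pi ^ 2)⁻¹ * ∫ u in (-2:ℝ)..(2 - |ε|),
      (Real.sqrt (4 - u ^ 2) * Real.sqrt (4 - (u + |ε|) ^ 2))⁻¹
  else 0

/-- The three-dimensional density of states `N_{t_z}(ε)`. -/
def N3 (tz ε : ℝ) : ℝ :=
  Real.pi⁻¹ * ∫ u in (-2:ℝ)..2, N0 (tz * u + ε) / Real.sqrt (4 - u ^ 2)

/-- `tanh (x / y)` with the convention that it equals `1` when `y = 0`. -/
def thQ (x y : ℝ) : ℝ := if y = 0 then 1 else Real.tanh (x / y)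

/-- The tight-binding band relation of the anisotropic 3D model. -/
def bandE (tz k₁ k₂ k₃ : ℝ) : ℝ :=
  -2 * (Real.cos k₁ + Real.cos k₂) - 2 * tz * Real.cos k₃

/-- The integrand of the Néel-temperature equation, interpreted as `U/(4T)` where the band
relation vanishes. -/
def neelIntegrand (U tz T k₁ k₂ k₃ : ℝ) : ℝ :=
  if bandE tz k₁ k₂ k₃ = 0 then U / (4 * T)
  else U * Real.tanh (bandE tz k₁ k₂ k₃ / (2 * T)) / (2 * bandE tz k₁ k₂ k₃)

/-- The equation characterizing the Néel temperature of the anisotropic 3D model. -/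
def neelEq (U tz T : ℝ) : Prop :=
  1 = (∫ k₁ in (-Real.pi)..Real.pi, ∫ k₂ in (-Real.pi)..Real.pi,
        ∫ k₃ in (-Real.pi)..Real.pi, neelIntegrand U tz T k₁ k₂ k₃) / (2 * Real.pi) ^ 3

/-- The antiferromagnetic mean-field (gap) equation of the anisotropic 3D model. -/
def gapEq (U tz T Δ : ℝ) : Prop :=
  1 = (∫ k₁ in (-Real.pi)..Real.pi, ∫ k₂ in (-Real.pi)..Real.pi,
        ∫ k₃ in (-Real.pi)..Real.pi,
          U * thQ (Real.sqrt (Δ ^ 2 + bandE tz k₁ k₂ k₃ ^ 2)) (2 * T)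
            / (2 * Real.sqrt (Δ ^ 2 + bandE tz k₁ k₂ k₃ ^ 2))) / (2 * Real.pi) ^ 3

/-- The 2D band relation. -/
def bandE2 (k₁ k₂ : ℝ) : ℝ := -2 * (Real.cos k₁ + Real.cos k₂)

/-- The equation characterizing the 2D Néel temperature. -/
def neelEq2 (U T : ℝ) : Prop :=
  1 = (∫ k₁ in (-Real.pi)..Real.pi, ∫ k₂ in (-Real.pi)..Real.pi,
        (if bandE2 k₁ k₂ = 0 then U / (4 * T)
         else U * Real.tanh (bandE2 k₁ k₂ / (2 * T)) / (2 * bandE2 k₁ k₂))) / (2 * Real.pi) ^ 2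

/-- The 2D antiferromagnetic mean-field (gap) equation. -/
def gapEq2 (U T Δ : ℝ) : Prop :=
  1 = (∫ k₁ in (-Real.pi)..Real.pi, ∫ k₂ in (-Real.pi)..Real.pi,
        U * thQ (Real.sqrt (Δ ^ 2 + bandE2 k₁ k₂ ^ 2)) (2 * T)
          / (2 * Real.sqrt (Δ ^ 2 + bandE2 k₁ k₂ ^ 2))) / (2 * Real.pi) ^ 2

/-- The BCS-type function `J(x,y)`. -/
def Jfun (x y : ℝ) : ℝ :=
  ∫ ε in Set.Ioi (0:ℝ),
    (thQ (Real.sqrt (x ^ 2 + ε ^ 2)) (2 * y) / Real.sqrt (x ^ 2 + ε ^ 2)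
      - Real.tanh (ε / 2) / ε)

/-- `f` is the BCS gap-ratio function: for every `y ∈ [0,1)`, `f y` is the unique positive
solution `x` of `J(x,y) = 0`. -/
def IsBCS (f : ℝ → ℝ) : Prop :=
  ∀ y ∈ Set.Ico (0:ℝ) 1,
    0 < f y ∧ Jfun (f y) y = 0 ∧ ∀ x, 0 < x → Jfun x y = 0 → x = f y

/-!
If `2 T_N ≤ Δ`, then pointwise in `k` the gap integrand at `(T, Δ)` is at most the Néel integrand
at `T_N`, strictly where `ε(k) ≠ 0`. Up to the factor `U / 2` this is
`thQ (√(Δ² + ε²)) (2T) / √(Δ² + ε²) ≤ 1 / √((2T_N)² + ε²) < tanh (ε / 2T_N) / ε`, and the last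
inequality is `tanh (arsinh s) < tanh s` for `s = ε / 2T_N > 0`, since
`tanh (arsinh s) = s / √(1 + s²)` and `arsinh s < s`. Both integrands are continuous on the cube,
so their integrals differ, and the Néel and gap equations cannot both hold.
The first claim is the same pointwise inequality with `T_N = 1`.
-/

namespace Real

theorem hasDerivAt_tanh (x : ℝ) : HasDerivAt tanh (1 / cosh x ^ 2) x := by
  have h := (hasDerivAt_sinh x).div (hasDerivAt_cosh x) (cosh_pos x).ne'
  rw [← sq, ← sq, cosh_sq_sub_sinh_sq] at h
  rwa [show sinh / cosh = tanh from funext fun y => (tanh_eq_sinh_div_cosh y).symm] at h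

theorem differentiable_tanh : Differentiable ℝ tanh :=
  fun x => (hasDerivAt_tanh x).differentiableAt

@[fun_prop]
theorem continuous_tanh : Continuous tanh := differentiable_tanh.continuous

theorem tanh_strictMono : StrictMono tanh := fun a b hab => by
  have mem : ∀ x, tanh x ∈ Ioo (-1) 1 := fun x => ⟨neg_one_lt_tanh x, tanh_lt_one x⟩
  rwa [← artanh_lt_artanh_iff (mem a) (mem b), artanh_tanh, artanh_tanh]

theorem div_sqrt_sq_add_sq_lt_tanh {a b : ℝ} (ha : 0 < a) (hb : 0 < b) :
    b / √(a ^ 2 + b ^ 2) < tanh (b / a) := by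
  have hsqrt : √(1 + (b / a) ^ 2) = √(a ^ 2 + b ^ 2) / a := by
    rw [show 1 + (b / a) ^ 2 = (a ^ 2 + b ^ 2) / a ^ 2 by field_simp, sqrt_div' _ (sq_nonneg a),
      sqrt_sq ha.le]
  have hlt : arsinh (b / a) < b / a := by
    conv_rhs => rw [← arsinh_sinh (b / a)]
    exact arsinh_lt_arsinh.mpr (self_lt_sinh_iff.mpr (by positivity))
  calc b / √(a ^ 2 + b ^ 2) = tanh (arsinh (b / a)) := by
        rw [tanh_arsinh, hsqrt]; field_simp
    _ < tanh (b / a) := tanh_strictMono hlt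

end Real

theorem thQ_le_one (x y : ℝ) : thQ x y ≤ 1 := by
  unfold thQ
  split_ifs
  exacts [le_rfl, (tanh_lt_one _).le]

theorem continuous_thQ_left (y : ℝ) : Continuous fun x => thQ x y := by
  by_cases hy : y = 0 <;> simp only [thQ, hy, if_true, if_false] <;> fun_prop

def tanhSlope (a : ℝ) : ℝ → ℝ := dslope (fun ε => tanh (ε / a)) 0

theorem tanhSlope_of_ne {a ε : ℝ} (hε : ε ≠ 0) : tanhSlope a ε = tanh (ε / a) / ε := by
  simp [tanhSlope, dslope_of_ne _ hε, slope_def_field]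

theorem tanhSlope_zero (a : ℝ) : tanhSlope a 0 = 1 / a := by
  have h := (hasDerivAt_tanh (0 / a)).comp 0 ((hasDerivAt_id (0 : ℝ)).div_const a)
  simp only [zero_div, cosh_zero, one_pow, div_one, one_mul] at h
  rw [tanhSlope, dslope_same]
  exact h.deriv

theorem continuous_tanhSlope (a : ℝ) : Continuous (tanhSlope a) := by
  have hd : Differentiable ℝ fun ε => tanh (ε / a) :=
    differentiable_tanh.comp (differentiable_id.div_const a)
  refine continuous_iff_continuousAt.mpr fun ε => ?_
  rcases eq_or_ne ε 0 with rfl | hε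
  · exact continuousAt_dslope_same.mpr (hd 0)
  · exact (continuousAt_dslope_of_ne hε).mpr (hd ε).continuousAt

theorem tanhSlope_abs (a ε : ℝ) : tanhSlope a |ε| = tanhSlope a ε := by
  rcases eq_or_ne ε 0 with rfl | hε
  · rw [abs_zero]
  rw [tanhSlope_of_ne hε, tanhSlope_of_ne (abs_ne_zero.mpr hε)]
  rcases abs_cases ε with ⟨h, _⟩ | ⟨h, _⟩
  · rw [h]
  · rw [h, neg_div, tanh_neg, neg_div_neg_eq]

theorem inv_sqrt_lt_tanhSlope {a ε : ℝ} (ha : 0 < a) (hε : ε ≠ 0) :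
    (√(a ^ 2 + ε ^ 2))⁻¹ < tanhSlope a ε := by
  have hpos : 0 < |ε| := abs_pos.mpr hε
  rw [← tanhSlope_abs, tanhSlope_of_ne hpos.ne', lt_div_iff₀ hpos, ← sq_abs ε, ← div_eq_inv_mul]
  exact div_sqrt_sq_add_sq_lt_tanh ha hpos

theorem inv_sqrt_le_tanhSlope {a : ℝ} (ha : 0 < a) (ε : ℝ) :
    (√(a ^ 2 + ε ^ 2))⁻¹ ≤ tanhSlope a ε := by
  rcases eq_or_ne ε 0 with rfl | hε
  · rw [tanhSlope_zero, zero_pow two_ne_zero, add_zero, sqrt_sq ha.le, one_div]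
  · exact (inv_sqrt_lt_tanhSlope ha hε).le

theorem thQ_div_sqrt_le_inv_sqrt {a x : ℝ} (ha : 0 < a) (hax : a ≤ x) (ε y : ℝ) :
    thQ (√(x ^ 2 + ε ^ 2)) y / √(x ^ 2 + ε ^ 2) ≤ (√(a ^ 2 + ε ^ 2))⁻¹ := by
  have hsq : a ^ 2 + ε ^ 2 ≤ x ^ 2 + ε ^ 2 := by gcongr
  have hpos : 0 < √(a ^ 2 + ε ^ 2) := sqrt_pos.mpr (by positivity)
  calc thQ (√(x ^ 2 + ε ^ 2)) y / √(x ^ 2 + ε ^ 2) ≤ (√(x ^ 2 + ε ^ 2))⁻¹ := by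
        rw [div_eq_mul_inv]
        exact mul_le_of_le_one_left (by positivity) (thQ_le_one _ _)
    _ ≤ (√(a ^ 2 + ε ^ 2))⁻¹ := inv_anti₀ hpos (sqrt_le_sqrt hsq)

theorem thQ_div_sqrt_lt_tanhSlope {a x ε : ℝ} (ha : 0 < a) (hax : a ≤ x) (hε : ε ≠ 0) (y : ℝ) :
    thQ (√(x ^ 2 + ε ^ 2)) y / √(x ^ 2 + ε ^ 2) < tanhSlope a ε :=
  (thQ_div_sqrt_le_inv_sqrt ha hax ε y).trans_lt (inv_sqrt_lt_tanhSlope ha hε)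

theorem thQ_div_sqrt_le_tanhSlope {a x : ℝ} (ha : 0 < a) (hax : a ≤ x) (ε y : ℝ) :
    thQ (√(x ^ 2 + ε ^ 2)) y / √(x ^ 2 + ε ^ 2) ≤ tanhSlope a ε :=
  (thQ_div_sqrt_le_inv_sqrt ha hax ε y).trans (inv_sqrt_le_tanhSlope ha ε)

theorem intervalIntegral_triple_lt_of_le_of_lt {F G : ℝ × ℝ × ℝ → ℝ} {a b : ℝ} (hab : a < b)
    (hF : Continuous F) (hG : Continuous G) (hle : ∀ p, F p ≤ G p) {x₀ y₀ z₀ : ℝ}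
    (hx₀ : x₀ ∈ Icc a b) (hy₀ : y₀ ∈ Icc a b) (hz₀ : z₀ ∈ Icc a b)
    (hlt : F (x₀, y₀, z₀) < G (x₀, y₀, z₀)) :
    ∫ x in a..b, ∫ y in a..b, ∫ z in a..b, F (x, y, z)
      < ∫ x in a..b, ∫ y in a..b, ∫ z in a..b, G (x, y, z) := by
  have integral_lt {f g : ℝ → ℝ} (hf : Continuous f) (hg : Continuous g) (hfg : ∀ t, f t ≤ g t)
      {c : ℝ} (hc : c ∈ Icc a b) (hfgc : f c < g c) : ∫ t in a..b, f t < ∫ t in a..b, g t :=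
    intervalIntegral.integral_lt_integral_of_continuousOn_of_le_of_exists_lt hab
      hf.continuousOn hg.continuousOn (fun t _ => hfg t) ⟨c, hc, hfgc⟩
  have integral_le {f g : ℝ → ℝ} (hf : Continuous f) (hg : Continuous g) (hfg : ∀ t, f t ≤ g t) :
      ∫ t in a..b, f t ≤ ∫ t in a..b, g t :=
    intervalIntegral.integral_mono_on hab.le (hf.intervalIntegrable a b)
      (hg.intervalIntegrable a b) fun t _ => hfg t
  have hz x y : ∫ z in a..b, F (x, y, z) ≤ ∫ z in a..b, G (x, y, z) :=
    integral_le (by fun_prop) (by fun_prop) fun z => hle _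
  have hyz x : ∫ y in a..b, ∫ z in a..b, F (x, y, z) ≤ ∫ y in a..b, ∫ z in a..b, G (x, y, z) :=
    integral_le (by fun_prop) (by fun_prop) (hz x)
  refine integral_lt (by fun_prop) (by fun_prop) hyz hx₀ ?_
  refine integral_lt (by fun_prop) (by fun_prop) (hz x₀) hy₀ ?_
  exact integral_lt (by fun_prop) (by fun_prop) (fun z => hle _) hz₀ hlt

def gapIntegrand (U tz T Δ k₁ k₂ k₃ : ℝ) : ℝ :=
  U * thQ (√(Δ ^ 2 + bandE tz k₁ k₂ k₃ ^ 2)) (2 * T) / (2 * √(Δ ^ 2 + bandE tz k₁ k₂ k₃ ^ 2))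

theorem gapIntegrand_eq (U tz T Δ k₁ k₂ k₃ : ℝ) :
    gapIntegrand U tz T Δ k₁ k₂ k₃ = U / 2 *
      (thQ (√(Δ ^ 2 + bandE tz k₁ k₂ k₃ ^ 2)) (2 * T) / √(Δ ^ 2 + bandE tz k₁ k₂ k₃ ^ 2)) := by
  rw [gapIntegrand]
  ring

theorem neelIntegrand_eq (U tz T k₁ k₂ k₃ : ℝ) :
    neelIntegrand U tz T k₁ k₂ k₃ = U / 2 * tanhSlope (2 * T) (bandE tz k₁ k₂ k₃) := by
  rw [neelIntegrand]
  split_ifs with h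
  · rw [h, tanhSlope_zero]
    ring
  · rw [tanhSlope_of_ne h]
    ring

theorem continuous_bandE (tz : ℝ) : Continuous fun p : ℝ × ℝ × ℝ => bandE tz p.1 p.2.1 p.2.2 := by
  unfold bandE
  fun_prop

theorem continuous_neelIntegrand (U tz T : ℝ) :
    Continuous fun p : ℝ × ℝ × ℝ => neelIntegrand U tz T p.1 p.2.1 p.2.2 := by
  simp only [neelIntegrand_eq]
  exact continuous_const.mul ((continuous_tanhSlope _).comp (continuous_bandE tz))

theorem continuous_gapIntegrand (U tz T : ℝ) {Δ : ℝ} (hΔ : Δ ≠ 0) :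
    Continuous fun p : ℝ × ℝ × ℝ => gapIntegrand U tz T Δ p.1 p.2.1 p.2.2 := by
  have hsqrt : Continuous fun p : ℝ × ℝ × ℝ => √(Δ ^ 2 + bandE tz p.1 p.2.1 p.2.2 ^ 2) :=
    (continuous_const.add ((continuous_bandE tz).pow 2)).sqrt
  refine (continuous_const.mul ((continuous_thQ_left _).comp hsqrt)).div
    (continuous_const.mul hsqrt) fun p => ?_
  have : 0 < √(Δ ^ 2 + bandE tz p.1 p.2.1 p.2.2 ^ 2) := sqrt_pos.mpr (by positivity)
  positivity

theorem gapIntegrand_le_neelIntegrand {U TN Δ : ℝ} (hU : 0 < U) (hTN : 0 < TN) (hΔ : 2 * TN ≤ Δ)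
    (tz T k₁ k₂ k₃ : ℝ) : gapIntegrand U tz T Δ k₁ k₂ k₃ ≤ neelIntegrand U tz TN k₁ k₂ k₃ := by
  rw [gapIntegrand_eq, neelIntegrand_eq]
  gcongr
  exact thQ_div_sqrt_le_tanhSlope (by positivity) hΔ _ _

theorem gapIntegrand_lt_neelIntegrand {U TN Δ tz k₁ k₂ k₃ : ℝ} (hU : 0 < U) (hTN : 0 < TN)
    (hΔ : 2 * TN ≤ Δ) (hε : bandE tz k₁ k₂ k₃ ≠ 0) (T : ℝ) :
    gapIntegrand U tz T Δ k₁ k₂ k₃ < neelIntegrand U tz TN k₁ k₂ k₃ := by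
  rw [gapIntegrand_eq, neelIntegrand_eq]
  gcongr
  exact thQ_div_sqrt_lt_tanhSlope (by positivity) hΔ hε _

/-- Lemma 6.1: the pointwise inequality (3.1), and consequently any positive solution of the
gap equation at a temperature `T ≤ T_N` satisfies `Δ < 2 T_N`. -/
theorem gap_lt_twice_neel :
    (∀ ε : ℝ, 0 < ε → ∀ x : ℝ, 2 ≤ x → ∀ y ∈ Set.Icc (0:ℝ) 1,
      thQ (Real.sqrt (x ^ 2 + ε ^ 2)) (2 * y) / Real.sqrt (x ^ 2 + ε ^ 2)
        < Real.tanh (ε / 2) / ε) ∧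
    (∀ U tz : ℝ, 0 < U → 0 ≤ tz → ∀ TN : ℝ, 0 < TN → neelEq U tz TN →
      ∀ T : ℝ, 0 ≤ T → T ≤ TN → ∀ Δ : ℝ, 0 < Δ → gapEq U tz T Δ → Δ < 2 * TN) := by
  refine ⟨fun ε hε x hx y _ => ?_, fun U tz hU htz TN hTN hneel T _ _ Δ hΔ hgap => ?_⟩
  · simpa only [tanhSlope_of_ne hε.ne'] using thQ_div_sqrt_lt_tanhSlope two_pos hx hε.ne' (2 * y)
  by_contra! hΔTN
  have hπ : (2 * π) ^ 3 ≠ 0 := by positivity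
  have hneel_int := (eq_div_iff hπ).mp hneel
  have hgap_int := (eq_div_iff hπ).mp hgap
  have hband : bandE tz 0 0 0 ≠ 0 := by
    simp only [bandE, cos_zero]
    linarith
  have hmem : (0 : ℝ) ∈ Icc (-π) π := ⟨by linarith [pi_pos], pi_pos.le⟩
  have hlt := intervalIntegral_triple_lt_of_le_of_lt (neg_lt_self pi_pos)
    (continuous_gapIntegrand U tz T hΔ.ne') (continuous_neelIntegrand U tz TN)
    (fun _ => gapIntegrand_le_neelIntegrand hU hTN hΔTN tz T _ _ _) hmem hmem hmem
    (gapIntegrand_lt_neelIntegrand hU hTN hΔTN hband T)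
  simp only [gapIntegrand] at hlt
  linarith
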